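/- arXiv:0903.2462 — 7 statements merged into one kernel-verified Lean document; each statement's English description precedes it below -/
import Mathlib

section
/- Let R be a ring with a reduction relation ⟹ satisfying axioms (A1)–(A3). If additionally the Translation Lemma holds (for every set F ⊆ R and all α, β ∈ R, α − β ⟹*_F 0 implies there exists γ with α ⟹*_F γ and β ⟹*_F γ), then every weak Gröbner basis is a Gröbner basis: if B ⊆ R satisfies that ⟹_B is terminating and every element of the ideal generated by B reduces to 0 by ⟹_B, then ⟹*⟺_B equals the ideal congruence modulo ideal(B) and ⟹_B is confluent. -/
/-- The (two-sided) ideal generated by a set `B`: all finite sums `∑ gᵢ * bᵢ * hᵢ`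
with `bᵢ ∈ B`. -/
def idealSpan {A : Type*} [Ring A] (B : Set A) : Set A :=
  {x | ∃ (n : ℕ) (g h b : Fin n → A), (∀ i, b i ∈ B) ∧ x = ∑ i, g i * b i * h i}

/-- Reduction by a set: `a ⟹_B c` iff `a ⟹_b c` for some `b ∈ B`. -/
def RedBy {A : Type*} (red : A → A → A → Prop) (B : Set A) (a c : A) : Prop :=
  ∃ b ∈ B, red b a c

/-- A relation is terminating (Noetherian) if it admits no infinite chains. -/
def Terminating {A : Type*} (r : A → A → Prop) : Prop :=
  ¬ ∃ f : ℕ → A, ∀ n, r (f n) (f (n + 1))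

/-- Confluence of a relation. -/
def Confluent {A : Type*} (r : A → A → Prop) : Prop :=
  ∀ a b c : A, Relation.ReflTransGen r a b → Relation.ReflTransGen r a c →
    ∃ d, Relation.ReflTransGen r b d ∧ Relation.ReflTransGen r c d

lemma idealSpan_zero {A : Type*} [Ring A] (B : Set A) : (0 : A) ∈ idealSpan B :=
  ⟨0, ![], ![], ![], fun i => i.elim0, by simp⟩

lemma idealSpan_add {A : Type*} [Ring A] {B : Set A} {x y : A}
    (hx : x ∈ idealSpan B) (hy : y ∈ idealSpan B) : x + y ∈ idealSpan B := by
  obtain ⟨n, g, h, b, hb, rfl⟩ := hx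
  obtain ⟨m, g', h', b', hb', rfl⟩ := hy
  refine ⟨n + m, Fin.addCases g g', Fin.addCases h h', Fin.addCases b b', ?_, ?_⟩
  · intro i
    refine Fin.addCases (fun j => ?_) (fun j => ?_) i <;> simp [hb, hb']
  · rw [Fin.sum_univ_add]
    simp

lemma idealSpan_neg {A : Type*} [Ring A] {B : Set A} {x : A}
    (hx : x ∈ idealSpan B) : -x ∈ idealSpan B := by
  obtain ⟨n, g, h, b, hb, rfl⟩ := hx
  exact ⟨n, fun i => -(g i), h, b, hb, by simp [Finset.sum_neg_distrib]⟩

lemma idealSpan_mono {A : Type*} [Ring A] {B C : Set A} (hBC : B ⊆ C) :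
    idealSpan B ⊆ idealSpan C := by
  rintro x ⟨n, g, h, b, hb, rfl⟩
  exact ⟨n, g, h, b, fun i => hBC (hb i), rfl⟩

lemma redBy_diff_mem {A : Type*} [Ring A] {red : A → A → A → Prop}
    (hA2 : ∀ b a c : A, red b a c → a - c ∈ idealSpan {b})
    {B : Set A} {a c : A} (h : RedBy red B a c) : a - c ∈ idealSpan B := by
  obtain ⟨b, hbB, hr⟩ := h
  exact idealSpan_mono (by simpa using hbB) (hA2 b a c hr)

lemma rtgen_diff_mem {A : Type*} [Ring A] {red : A → A → A → Prop}
    (hA2 : ∀ b a c : A, red b a c → a - c ∈ idealSpan {b})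
    {B : Set A} {a c : A} (h : Relation.ReflTransGen (RedBy red B) a c) :
    a - c ∈ idealSpan B := by
  induction h with
  | refl => simpa using idealSpan_zero B
  | tail _ hbc ih =>
    rename_i x y
    have := idealSpan_add ih (redBy_diff_mem hA2 hbc)
    simpa using this

lemma rtgen_eqvGen {A : Type*} {r : A → A → Prop} {a c : A}
    (h : Relation.ReflTransGen r a c) : Relation.EqvGen r a c := by
  induction h with
  | refl => exact Relation.EqvGen.refl a
  | tail _ hbc ih => exact ih.trans _ _ _ (Relation.EqvGen.rel _ _ hbc)

/-- If a ring with a reduction relation satisfying (A1)–(A3) also satisfies the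
Translation Lemma, then every weak Gröbner basis is a Gröbner basis. -/
theorem weakGB_is_GB_of_translation {A : Type*} [Ring A] (red : A → A → A → Prop)
    (hA1 : ∀ B : Set A, B.Finite → Terminating (RedBy red B))
    (hA2 : ∀ b a c : A, red b a c → a - c ∈ idealSpan {b})
    (hA3 : ∀ a : A, a ≠ 0 → red a a 0)
    (htrans : ∀ (F : Set A) (a b : A), Relation.ReflTransGen (RedBy red F) (a - b) 0 →
        ∃ c, Relation.ReflTransGen (RedBy red F) a c ∧ Relation.ReflTransGen (RedBy red F) b c)
    (B : Set A)
    (hterm : Terminating (RedBy red B))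
    (hweak : ∀ a ∈ idealSpan B, Relation.ReflTransGen (RedBy red B) a 0) :
    (∀ a b : A, Relation.EqvGen (RedBy red B) a b ↔ a - b ∈ idealSpan B) ∧
      Confluent (RedBy red B) := by
  constructor
  · intro a b
    constructor
    · intro h
      induction h with
      | rel x y hxy => exact redBy_diff_mem hA2 hxy
      | refl x => simpa using idealSpan_zero B
      | symm x y _ ih => simpa using idealSpan_neg ih
      | trans x y z _ _ ih1 ih2 => simpa using idealSpan_add ih1 ih2
    · intro h
      obtain ⟨c, hac, hbc⟩ := htrans B a b (hweak _ h)
      exact (rtgen_eqvGen hac).trans _ _ _ (rtgen_eqvGen hbc).symm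
  · intro a b c hab hac
    have hdiff : b - c ∈ idealSpan B := by
      have h1 := rtgen_diff_mem hA2 hab
      have h2 := rtgen_diff_mem hA2 hac
      have := idealSpan_add (idealSpan_neg h1) h2
      simpa [sub_sub_sub_cancel_left] using this
    obtain ⟨d, hbd, hcd⟩ := htrans B b c (hweak _ hdiff)
    exact ⟨d, hbd, hcd⟩
end

section
/- Let R be a reduction ring satisfying axiom (A4). If B ⊆ R is a Gröbner basis of a finitely generated ideal of R and B' ⊆ B is such that every β ∈ B reduces to 0 with respect to ⟹_{B'}, then B' is again a Gröbner basis of ideal(B); in particular α ⟹*_B 0 implies α ⟹*_{B'} 0 for all α ∈ R. -/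
/-- `G` is a Gröbner basis of the ideal `I`: `G` generates `I`, the
reflexive-symmetric-transitive closure of reduction by `G` equals the
congruence modulo `I`, and reduction by `G` is complete. -/
def GBOf {A : Type*} [Ring A] (red : A → A → A → Prop) (G : Set A) (I : Set A) : Prop :=
  idealSpan G = I ∧
    (∀ a b : A, Relation.EqvGen (RedBy red G) a b ↔ a - b ∈ I) ∧
    Terminating (RedBy red G) ∧ Confluent (RedBy red G)

/-!
Walking along a `⟹_{B'}`-reduction of `β ∈ B` to `0`, (A4) shows that whatever is reducible by
`β` is reducible by `B'`: otherwise reducibility would be handed down the chain to `0`, and by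
(A1), (A2) nothing is reducible by `0`. Hence `B'`-normal forms are `B`-normal forms. As
`⟹_{B'} ⊆ ⟹_B` terminates, every element has a `B'`-normal form, and confluence of `⟹_B`
forces two `B'`-normal forms of `⟺*_B`-equivalent elements to coincide. This gives confluence
of `⟹_{B'}` and `⟺*_{B'} = ⟺*_B`; since (A1) and (A3) make `0` irreducible, `α ⟹*_B 0` then
yields `α ⟹*_{B'} 0`.
-/

open Relation

section AbstractRewriting

variable {α : Type*} {r s : α → α → Prop}

def IsNormalForm (r : α → α → Prop) (a : α) : Prop :=
  ∀ b, ¬ r a b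

theorem IsNormalForm.eq_of_reflTransGen {a b : α} (ha : IsNormalForm r a)
    (h : ReflTransGen r a b) : b = a := by
  rcases h.cases_head with h | ⟨c, hc, -⟩
  · exact h.symm
  · exact absurd hc (ha c)

theorem Terminating.mono (hsr : s ≤ r) (hr : Terminating r) : Terminating s :=
  fun ⟨f, hf⟩ => hr ⟨f, fun n => hsr _ _ (hf n)⟩

theorem Terminating.exists_normalForm (hr : Terminating r) (a : α) :
    ∃ n, ReflTransGen r a n ∧ IsNormalForm r n := by
  by_contra! hcon
  have step : ∀ x : {x // ReflTransGen r a x}, ∃ y : {x // ReflTransGen r a x}, r x y := by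
    rintro ⟨x, hx⟩
    obtain ⟨y, hy⟩ := not_forall_not.mp (hcon x hx)
    exact ⟨⟨y, hx.tail hy⟩, hy⟩
  choose f hf using step
  refine hr ⟨fun n => (f^[n] ⟨a, .refl⟩).1, fun n => ?_⟩
  simpa only [Function.iterate_succ_apply'] using hf _

theorem Confluent.exists_join_of_eqvGen (hr : Confluent r) {a b : α} (h : EqvGen r a b) :
    ∃ d, ReflTransGen r a d ∧ ReflTransGen r b d := by
  induction h with
  | rel a b h => exact ⟨b, .single h, .refl⟩
  | refl a => exact ⟨a, .refl, .refl⟩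
  | symm a b _ ih =>
    obtain ⟨d, had, hbd⟩ := ih
    exact ⟨d, hbd, had⟩
  | trans a b c _ _ ihab ihbc =>
    obtain ⟨d₁, had₁, hbd₁⟩ := ihab
    obtain ⟨d₂, hbd₂, hcd₂⟩ := ihbc
    obtain ⟨e, hd₁e, hd₂e⟩ := hr b d₁ d₂ hbd₁ hbd₂
    exact ⟨e, had₁.trans hd₁e, hcd₂.trans hd₂e⟩

theorem Confluent.eq_of_eqvGen (hr : Confluent r) {a b : α} (ha : IsNormalForm r a)
    (hb : IsNormalForm r b) (h : EqvGen r a b) : a = b := by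
  obtain ⟨d, had, hbd⟩ := hr.exists_join_of_eqvGen h
  rw [← ha.eq_of_reflTransGen had, hb.eq_of_reflTransGen hbd]

theorem Confluent.eq_of_le_of_isNormalForm (hsr : s ≤ r) (hr : Confluent r)
    (hnf : ∀ a, IsNormalForm s a → IsNormalForm r a) {a b na nb : α}
    (ha : ReflTransGen s a na) (hna : IsNormalForm s na)
    (hb : ReflTransGen s b nb) (hnb : IsNormalForm s nb) (h : EqvGen r a b) : na = nb := by
  have hmono : ReflTransGen s ≤ EqvGen r := fun x y hxy =>
    EqvGen.mono hsr _ _ (EqvGen.reflTransGen_le_eqvGen _ _ _ hxy)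
  exact hr.eq_of_eqvGen (hnf _ hna) (hnf _ hnb)
    (.trans _ _ _ (.symm _ _ (hmono _ _ ha)) (.trans _ _ _ h (hmono _ _ hb)))

theorem confluent_of_le_of_isNormalForm (hsr : s ≤ r) (hr : Confluent r) (hs : Terminating s)
    (hnf : ∀ a, IsNormalForm s a → IsNormalForm r a) : Confluent s := by
  intro a b c hab hac
  obtain ⟨nb, hbnb, hnb⟩ := hs.exists_normalForm b
  obtain ⟨nc, hcnc, hnc⟩ := hs.exists_normalForm c
  have hbc : EqvGen r b c := EqvGen.mono hsr _ _ <|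
    .trans _ _ _ (.symm _ _ (EqvGen.reflTransGen_le_eqvGen _ _ _ hab))
      (EqvGen.reflTransGen_le_eqvGen _ _ _ hac)
  obtain rfl := hr.eq_of_le_of_isNormalForm hsr hnf hbnb hnb hcnc hnc hbc
  exact ⟨nb, hbnb, hcnc⟩

theorem eqvGen_iff_of_le_of_isNormalForm (hsr : s ≤ r) (hr : Confluent r) (hs : Terminating s)
    (hnf : ∀ a, IsNormalForm s a → IsNormalForm r a) {a b : α} :
    EqvGen s a b ↔ EqvGen r a b := by
  refine ⟨EqvGen.mono hsr _ _, fun h => ?_⟩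
  obtain ⟨na, hana, hna⟩ := hs.exists_normalForm a
  obtain ⟨nb, hbnb, hnb⟩ := hs.exists_normalForm b
  obtain rfl := hr.eq_of_le_of_isNormalForm hsr hnf hana hna hbnb hnb h
  exact .trans _ _ _ (EqvGen.reflTransGen_le_eqvGen _ _ _ hana)
    (.symm _ _ (EqvGen.reflTransGen_le_eqvGen _ _ _ hbnb))

end AbstractRewriting

theorem RedBy.mono {A : Type*} {red : A → A → A → Prop} {B' B : Set A} (hsub : B' ⊆ B) :
    RedBy red B' ≤ RedBy red B :=
  fun _ _ ⟨β, hβ, h⟩ => ⟨β, hsub hβ, h⟩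

section ReductionRing

variable {A : Type*} [Ring A] {red : A → A → A → Prop}

theorem idealSpan_eq_span (B : Set A) : idealSpan B = TwoSidedIdeal.span B := by
  ext x
  constructor
  · rintro ⟨n, g, h, b, hb, rfl⟩
    exact TwoSidedIdeal.finsetSum_mem _ _ _ fun i _ =>
      TwoSidedIdeal.mul_mem_right _ _ _ (TwoSidedIdeal.mul_mem_left _ _ _
        (TwoSidedIdeal.subset_span (hb i)))
  · intro hx
    induction hx using TwoSidedIdeal.span_induction with
    | mem x hx => exact ⟨1, fun _ => 1, fun _ => 1, fun _ => x, fun _ => hx, by simp⟩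
    | zero => exact ⟨0, Fin.elim0, Fin.elim0, Fin.elim0, fun i => i.elim0, by simp⟩
    | add x y _ _ hx hy =>
      obtain ⟨n, g, h, b, hb, rfl⟩ := hx
      obtain ⟨m, g', h', b', hb', rfl⟩ := hy
      refine ⟨n + m, Fin.append g g', Fin.append h h', Fin.append b b',
        Fin.addCases (by simpa using hb) (by simpa using hb'), ?_⟩
      simp [Fin.sum_univ_add]
    | neg x _ hx =>
      obtain ⟨n, g, h, b, hb, rfl⟩ := hx
      exact ⟨n, -g, h, b, hb, by simp [← Finset.sum_neg_distrib]⟩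
    | left_absorb a x _ hx =>
      obtain ⟨n, g, h, b, hb, rfl⟩ := hx
      exact ⟨n, fun i => a * g i, h, b, hb, by simp [Finset.mul_sum, mul_assoc]⟩
    | right_absorb a x _ hx =>
      obtain ⟨n, g, h, b, hb, rfl⟩ := hx
      exact ⟨n, g, fun i => h i * a, b, hb, by simp [Finset.sum_mul, mul_assoc]⟩

theorem sub_mem_span_of_reflTransGen (hA2 : ∀ b a c : A, red b a c → a - c ∈ idealSpan {b})
    {B : Set A} {a c : A} (h : ReflTransGen (RedBy red B) a c) :
    a - c ∈ TwoSidedIdeal.span B := by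
  induction h with
  | refl => simp
  | @tail b c _ hbc ih =>
    obtain ⟨β, hβ, hred⟩ := hbc
    have hβ' : b - c ∈ TwoSidedIdeal.span B := TwoSidedIdeal.span_mono
      (Set.singleton_subset_iff.mpr hβ) ((idealSpan_eq_span {β}).subset (hA2 _ _ _ hred))
    simpa using TwoSidedIdeal.add_mem _ ih hβ'

theorem not_red_by_zero (hA1 : ∀ B : Set A, B.Finite → Terminating (RedBy red B))
    (hA2 : ∀ b a c : A, red b a c → a - c ∈ idealSpan {b}) (a c : A) : ¬ red 0 a c := by
  intro h
  have hac : a - c ∈ TwoSidedIdeal.span ({0} : Set A) :=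
    (idealSpan_eq_span _).subset (hA2 _ _ _ h)
  obtain rfl : a = c := sub_eq_zero.mp <|
    TwoSidedIdeal.span_le (I := ⊥).mpr (by simp) hac
  exact hA1 {0} (Set.finite_singleton _) ⟨fun _ => a, fun _ => ⟨0, rfl, h⟩⟩

/-- A step `0 ⟹_β c` would give the cycle `0 ⟹_β 0` if `c = 0`, and otherwise the cycle
`0 ⟹_β c ⟹_c 0 ⟹_β ⋯` by (A3). -/
theorem isNormalForm_zero (hA1 : ∀ B : Set A, B.Finite → Terminating (RedBy red B))
    (hA3 : ∀ a : A, a ≠ 0 → red a a 0) (B : Set A) : IsNormalForm (RedBy red B) 0 := by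
  rintro c ⟨β, -, h⟩
  by_cases hc : c = 0
  · subst hc
    exact hA1 {β} (Set.finite_singleton _) ⟨fun _ => 0, fun _ => ⟨β, rfl, h⟩⟩
  · refine hA1 {β, c} (Set.toFinite _) ⟨fun n => if Even n then 0 else c, fun n => ?_⟩
    rcases Nat.even_or_odd n with hn | hn
    · simpa [hn, Nat.even_add_one] using ⟨β, Or.inl rfl, h⟩
    · simpa [Nat.not_even_iff_odd.mpr hn, Nat.even_add_one, hn.add_one] using
        ⟨c, Or.inr rfl, hA3 c hc⟩

theorem exists_redBy_of_red_of_reflTransGen_zero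
    (hA1 : ∀ B : Set A, B.Finite → Terminating (RedBy red B))
    (hA2 : ∀ b a c : A, red b a c → a - c ∈ idealSpan {b})
    (hA4 : ∀ a b c d : A, (∃ x, red b a x) → red c b d →
        (∃ x, red c a x) ∨ (∃ x, red d a x))
    {B' : Set A} {β a x : A} (hβ : ReflTransGen (RedBy red B') β 0) (h : red β a x) :
    ∃ y, RedBy red B' a y := by
  induction hβ using ReflTransGen.head_induction_on generalizing x with
  | refl => exact absurd h (not_red_by_zero hA1 hA2 a x)
  | head hstep _ ih =>
    obtain ⟨γ, hγ, hred⟩ := hstep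
    rcases hA4 a _ γ _ ⟨x, h⟩ hred with ⟨y, hy⟩ | ⟨y, hy⟩
    · exact ⟨y, γ, hγ, hy⟩
    · exact ih hy

theorem isNormalForm_of_reflTransGen_zero
    (hA1 : ∀ B : Set A, B.Finite → Terminating (RedBy red B))
    (hA2 : ∀ b a c : A, red b a c → a - c ∈ idealSpan {b})
    (hA4 : ∀ a b c d : A, (∃ x, red b a x) → red c b d →
        (∃ x, red c a x) ∨ (∃ x, red d a x))
    {B B' : Set A} (hred0 : ∀ β ∈ B, ReflTransGen (RedBy red B') β 0) :
    ∀ a, IsNormalForm (RedBy red B') a → IsNormalForm (RedBy red B) a := by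
  rintro a ha x ⟨β, hβ, h⟩
  obtain ⟨y, hy⟩ := exists_redBy_of_red_of_reflTransGen_zero hA1 hA2 hA4 (hred0 β hβ) h
  exact ha y hy

theorem idealSpan_eq_of_reflTransGen_zero
    (hA2 : ∀ b a c : A, red b a c → a - c ∈ idealSpan {b})
    {B B' : Set A} (hsub : B' ⊆ B) (hred0 : ∀ β ∈ B, ReflTransGen (RedBy red B') β 0) :
    idealSpan B' = idealSpan B := by
  rw [idealSpan_eq_span, idealSpan_eq_span]
  refine congrArg _ (le_antisymm (TwoSidedIdeal.span_mono hsub) ?_)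
  exact TwoSidedIdeal.span_le.mpr fun β hβ => by
    simpa using sub_mem_span_of_reflTransGen hA2 (hred0 β hβ)

end ReductionRing

theorem GB_of_subset_general {A : Type*} [Ring A] (red : A → A → A → Prop)
    (hA1 : ∀ B : Set A, B.Finite → Terminating (RedBy red B))
    (hA2 : ∀ b a c : A, red b a c → a - c ∈ idealSpan {b})
    (hA3 : ∀ a : A, a ≠ 0 → red a a 0)
    (hA4 : ∀ a b c d : A, (∃ x, red b a x) → red c b d →
        (∃ x, red c a x) ∨ (∃ x, red d a x))
    (B B' : Set A)
    (hGB : GBOf red B (idealSpan B))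
    (hsub : B' ⊆ B)
    (hred0 : ∀ β ∈ B, Relation.ReflTransGen (RedBy red B') β 0) :
    GBOf red B' (idealSpan B) ∧
      ∀ α : A, Relation.ReflTransGen (RedBy red B) α 0 →
        Relation.ReflTransGen (RedBy red B') α 0 := by
  obtain ⟨-, hcong, hterm, hconf⟩ := hGB
  have hle : RedBy red B' ≤ RedBy red B := RedBy.mono hsub
  have hterm' := hterm.mono hle
  have hnf := isNormalForm_of_reflTransGen_zero hA1 hA2 hA4 hred0
  have heqv : ∀ a b, EqvGen (RedBy red B') a b ↔ EqvGen (RedBy red B) a b :=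
    fun _ _ => eqvGen_iff_of_le_of_isNormalForm hle hconf hterm' hnf
  have hconf' := confluent_of_le_of_isNormalForm hle hconf hterm' hnf
  refine ⟨⟨idealSpan_eq_of_reflTransGen_zero hA2 hsub hred0,
    fun a b => (heqv a b).trans (hcong a b), hterm', hconf'⟩, fun α hα => ?_⟩
  obtain ⟨d, hαd, h0d⟩ :=
    hconf'.exists_join_of_eqvGen ((heqv α 0).mpr (EqvGen.reflTransGen_le_eqvGen _ _ _ hα))
  rwa [(isNormalForm_zero hA1 hA3 B').eq_of_reflTransGen h0d] at hαd

/-- In a reduction ring satisfying (A4): if `B` is a Gröbner basis of a finitely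
generated ideal and `B' ⊆ B` is such that every element of `B` reduces to `0`
by `B'`, then `B'` is again a Gröbner basis of `ideal(B)`; in particular
everything reducing to `0` by `B` reduces to `0` by `B'`. -/
theorem GB_of_subset {A : Type*} [Ring A] (red : A → A → A → Prop)
    (hA1 : ∀ B : Set A, B.Finite → Terminating (RedBy red B))
    (hA2 : ∀ b a c : A, red b a c → a - c ∈ idealSpan {b})
    (hA3 : ∀ a : A, a ≠ 0 → red a a 0)
    (hA4 : ∀ a b c d : A, (∃ x, red b a x) → red c b d →
        (∃ x, red c a x) ∨ (∃ x, red d a x))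
    (hRR : ∀ B : Set A, B.Finite → ∃ G : Set A, G.Finite ∧ GBOf red G (idealSpan B))
    (B B' : Set A)
    (hfg : ∃ S : Set A, S.Finite ∧ idealSpan S = idealSpan B)
    (hGB : GBOf red B (idealSpan B))
    (hsub : B' ⊆ B)
    (hred0 : ∀ β ∈ B, Relation.ReflTransGen (RedBy red B') β 0) :
    GBOf red B' (idealSpan B) ∧
      ∀ α : A, Relation.ReflTransGen (RedBy red B) α 0 →
        Relation.ReflTransGen (RedBy red B') α 0 :=
  GB_of_subset_general red hA1 hA2 hA3 hA4 B B' hGB hsub hred0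
end

section
/- If (R₁, ⟹¹) and (R₂, ⟹²) are reduction rings, then the direct sum R = R₁ × R₂ with componentwise operations and the reduction relation defined by (α₁,α₂) →_{(β₁,β₂)} (γ₁,γ₂) iff (α₁ ⟹¹_{β₁} γ₁ and α₂ = γ₂) or (α₁ = γ₁ and α₂ ⟹²_{β₂} γ₂) or (α₁ ⟹¹_{β₁} γ₁ and α₂ ⟹²_{β₂} γ₂), is again a reduction ring: every finitely generated ideal of R has a finite Gröbner basis. -/
/-- The reduction relation on the direct sum `R₁ × R₂`. -/
def prodRed {R₁ R₂ : Type*} (red1 : R₁ → R₁ → R₁ → Prop) (red2 : R₂ → R₂ → R₂ → Prop) :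
    (R₁ × R₂) → (R₁ × R₂) → (R₁ × R₂) → Prop := fun b a c =>
  (red1 b.1 a.1 c.1 ∧ a.2 = c.2) ∨ (a.1 = c.1 ∧ red2 b.2 a.2 c.2) ∨
    (red1 b.1 a.1 c.1 ∧ red2 b.2 a.2 c.2)

section IdealSpan

variable {A A' : Type*} [Ring A] [Ring A']

lemma zero_mem_idealSpan (B : Set A) : (0 : A) ∈ idealSpan B :=
  ⟨0, Fin.elim0, Fin.elim0, Fin.elim0, fun i => i.elim0, by simp⟩

lemma subset_idealSpan (B : Set A) : B ⊆ idealSpan B :=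
  fun b hb => ⟨1, fun _ => 1, fun _ => 1, fun _ => b, fun _ => hb, by simp⟩

lemma add_mem_idealSpan {B : Set A} {x y : A} (hx : x ∈ idealSpan B)
    (hy : y ∈ idealSpan B) : x + y ∈ idealSpan B := by
  obtain ⟨n, g, h, b, hb, rfl⟩ := hx
  obtain ⟨m, g', h', b', hb', rfl⟩ := hy
  refine ⟨n + m, Fin.append g g', Fin.append h h', Fin.append b b',
    Fin.addCases (by simpa using hb) (by simpa using hb'), ?_⟩
  simp [Fin.sum_univ_add]

lemma mul_mul_mem_idealSpan {B : Set A} {x : A} (hx : x ∈ idealSpan B) (g h : A) :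
    g * x * h ∈ idealSpan B := by
  obtain ⟨n, g', h', b, hb, rfl⟩ := hx
  refine ⟨n, fun i => g * g' i, fun i => h' i * h, b, hb, ?_⟩
  simp only [Finset.mul_sum, Finset.sum_mul, mul_assoc]

lemma sum_mem_idealSpan {B : Set A} {ι : Type*} {s : Finset ι} {f : ι → A}
    (hf : ∀ i ∈ s, f i ∈ idealSpan B) : ∑ i ∈ s, f i ∈ idealSpan B :=
  Finset.sum_induction f (· ∈ idealSpan B) (fun _ _ => add_mem_idealSpan)
    (zero_mem_idealSpan B) hf

lemma idealSpan_singleton_zero : idealSpan ({0} : Set A) = {0} := by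
  refine Set.eq_singleton_iff_unique_mem.2 ⟨zero_mem_idealSpan _, ?_⟩
  rintro _ ⟨n, g, h, b, hb, rfl⟩
  simp [show ∀ i, b i = 0 from hb]

lemma map_mem_idealSpan (f : A →+* A') {B : Set A} {C : Set A'} {x : A}
    (hx : x ∈ idealSpan B) (hBC : f '' B ⊆ insert 0 C) : f x ∈ idealSpan C := by
  obtain ⟨n, g, h, b, hb, rfl⟩ := hx
  simp only [map_sum, map_mul]
  refine sum_mem_idealSpan fun i _ => ?_
  rcases hBC ⟨b i, hb i, rfl⟩ with hzero | hmem
  · simpa [hzero] using zero_mem_idealSpan C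
  · exact mul_mul_mem_idealSpan (subset_idealSpan C hmem) _ _

lemma exists_mem_idealSpan_map_eq {f : A →+* A'} (hf : Function.Surjective f) {B : Set A}
    {C : Set A'} {x : A'} (hx : x ∈ idealSpan C) (hCB : C ⊆ f '' B) :
    ∃ y ∈ idealSpan B, f y = x := by
  obtain ⟨n, g, h, c, hc, rfl⟩ := hx
  choose b hb hbc using fun i => hCB (hc i)
  choose g' hg' using fun i => hf (g i)
  choose h' hh' using fun i => hf (h i)
  exact ⟨∑ i, g' i * b i * h' i, ⟨n, g', h', b, hb, rfl⟩, by simp [hg', hh', hbc]⟩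

variable {R₁ R₂ : Type*} [Ring R₁] [Ring R₂]

lemma idealSpan_prod {B : Set (R₁ × R₂)} {C₁ : Set R₁} {C₂ : Set R₂}
    (hC₁ : C₁ ⊆ Prod.fst '' B) (hB₁ : Prod.fst '' B ⊆ insert 0 C₁)
    (hC₂ : C₂ ⊆ Prod.snd '' B) (hB₂ : Prod.snd '' B ⊆ insert 0 C₂) :
    idealSpan B = idealSpan C₁ ×ˢ idealSpan C₂ := by
  ext x
  refine ⟨fun hx => ⟨map_mem_idealSpan (RingHom.fst R₁ R₂) hx hB₁,
    map_mem_idealSpan (RingHom.snd R₁ R₂) hx hB₂⟩, fun ⟨hx₁, hx₂⟩ => ?_⟩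
  obtain ⟨y₁, hy₁, hyx₁⟩ :=
    exists_mem_idealSpan_map_eq (f := RingHom.fst R₁ R₂) (fun a => ⟨(a, 0), rfl⟩) hx₁ hC₁
  obtain ⟨y₂, hy₂, hyx₂⟩ :=
    exists_mem_idealSpan_map_eq (f := RingHom.snd R₁ R₂) (fun a => ⟨(0, a), rfl⟩) hx₂ hC₂
  have hx : x = (1, 0) * y₁ * 1 + (0, 1) * y₂ * 1 := by
    ext <;> simp_all
  rw [hx]
  exact add_mem_idealSpan (mul_mul_mem_idealSpan hy₁ _ _) (mul_mul_mem_idealSpan hy₂ _ _)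

end IdealSpan

section Relations

open Function Relation

variable {α β : Type*}

lemma terminating_iff_wellFounded_flip {r : α → α → Prop} :
    Terminating r ↔ WellFounded (flip r) := by
  rw [wellFounded_iff_isEmpty_descending_chain, isEmpty_subtype, Terminating, not_exists]
  rfl

lemma Relation.EqvGen.lift' {r : α → α → Prop} {p : β → β → Prop} (f : α → β)
    (h : r ≤ (EqvGen p on f)) : EqvGen r ≤ (EqvGen p on f) := by
  intro a b hab
  induction hab with
  | rel a b hab => exact h a b hab
  | refl a => exact EqvGen.refl _
  | symm a b _ ih => exact EqvGen.symm _ _ ih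
  | trans a b c _ _ ih₁ ih₂ => exact EqvGen.trans _ _ _ ih₁ ih₂

namespace Prod

variable {r : α → α → Prop} {s : β → β → Prop}

lemma flip_gameAdd : flip (GameAdd r s) = GameAdd (flip r) (flip s) := by
  funext x y
  simp only [flip, gameAdd_iff, eq_comm]

lemma reflTransGen_gameAdd_iff {x y : α × β} :
    ReflTransGen (GameAdd r s) x y ↔ ReflTransGen r x.1 y.1 ∧ ReflTransGen s x.2 y.2 := by
  refine ⟨fun h => ⟨ReflTransGen.lift' Prod.fst ?_ _ _ h, ReflTransGen.lift' Prod.snd ?_ _ _ h⟩,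
    fun ⟨h₁, h₂⟩ => ?_⟩
  · rintro _ _ (h | h)
    exacts [ReflTransGen.single h, ReflTransGen.refl]
  · rintro _ _ (h | h)
    exacts [ReflTransGen.refl, ReflTransGen.single h]
  · exact (ReflTransGen.lift (·, x.2) (fun _ _ => GameAdd.fst) _ _ h₁).trans
      (ReflTransGen.lift (y.1, ·) (fun _ _ => GameAdd.snd) _ _ h₂)

lemma eqvGen_gameAdd_iff {x y : α × β} :
    EqvGen (GameAdd r s) x y ↔ EqvGen r x.1 y.1 ∧ EqvGen s x.2 y.2 := by
  refine ⟨fun h => ⟨EqvGen.lift' Prod.fst ?_ _ _ h, EqvGen.lift' Prod.snd ?_ _ _ h⟩,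
    fun ⟨h₁, h₂⟩ => ?_⟩
  · rintro _ _ (h | h)
    exacts [EqvGen.rel _ _ h, EqvGen.refl _]
  · rintro _ _ (h | h)
    exacts [EqvGen.refl _, EqvGen.rel _ _ h]
  · exact EqvGen.trans _ _ _
      (EqvGen.lift' (·, x.2) (fun a b h => EqvGen.rel _ _ (GameAdd.fst h)) _ _ h₁)
      (EqvGen.lift' (y.1, ·) (fun a b h => EqvGen.rel _ _ (GameAdd.snd h)) _ _ h₂)

end Prod

lemma Terminating.gameAdd {r : α → α → Prop} {s : β → β → Prop} (hr : Terminating r)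
    (hs : Terminating s) : Terminating (Prod.GameAdd r s) := by
  rw [terminating_iff_wellFounded_flip] at *
  rw [Prod.flip_gameAdd]
  exact hr.prod_gameAdd hs

lemma Confluent.gameAdd {r : α → α → Prop} {s : β → β → Prop} (hr : Confluent r)
    (hs : Confluent s) : Confluent (Prod.GameAdd r s) := by
  intro a b c hab hac
  rw [Prod.reflTransGen_gameAdd_iff] at hab hac
  obtain ⟨d₁, hbd₁, hcd₁⟩ := hr _ _ _ hab.1 hac.1
  obtain ⟨d₂, hbd₂, hcd₂⟩ := hs _ _ _ hab.2 hac.2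
  exact ⟨(d₁, d₂), Prod.reflTransGen_gameAdd_iff.2 ⟨hbd₁, hbd₂⟩,
    Prod.reflTransGen_gameAdd_iff.2 ⟨hcd₁, hcd₂⟩⟩

end Relations

section ReductionRing

variable {R₁ R₂ : Type*} {red1 : R₁ → R₁ → R₁ → Prop} {red2 : R₂ → R₂ → R₂ → Prop}

lemma not_red_zero {A : Type*} [Ring A] {red : A → A → A → Prop}
    (hterm : Terminating (RedBy red {0}))
    (hsub : ∀ b a c, red b a c → a - c ∈ idealSpan {b}) (a c : A) : ¬ red 0 a c := by
  intro h
  have hac := hsub 0 a c h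
  rw [idealSpan_singleton_zero, Set.mem_singleton_iff, sub_eq_zero] at hac
  subst hac
  exact hterm ⟨fun _ => a, fun _ => ⟨0, rfl, h⟩⟩

def prodBasis [Zero R₁] [Zero R₂] (G₁ : Set R₁) (G₂ : Set R₂) : Set (R₁ × R₂) :=
  (·, 0) '' G₁ ∪ (0, ·) '' G₂

lemma idealSpan_prodBasis [Ring R₁] [Ring R₂] (G₁ : Set R₁) (G₂ : Set R₂) :
    idealSpan (prodBasis G₁ G₂) = idealSpan G₁ ×ˢ idealSpan G₂ := by
  refine idealSpan_prod (fun g hg => ⟨(g, 0), .inl ⟨g, hg, rfl⟩, rfl⟩) ?_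
    (fun g hg => ⟨(0, g), .inr ⟨g, hg, rfl⟩, rfl⟩) ?_
  · rintro _ ⟨_, ⟨g, hg, rfl⟩ | ⟨g, hg, rfl⟩, rfl⟩
    exacts [.inr hg, .inl rfl]
  · rintro _ ⟨_, ⟨g, hg, rfl⟩ | ⟨g, hg, rfl⟩, rfl⟩
    exacts [.inl rfl, .inr hg]

lemma prodRed_mk_zero_iff [Zero R₂] (h₂ : ∀ a c, ¬ red2 0 a c) {g : R₁} {a c : R₁ × R₂} :
    prodRed red1 red2 (g, 0) a c ↔ red1 g a.1 c.1 ∧ a.2 = c.2 := by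
  simp [prodRed, h₂]

lemma prodRed_zero_mk_iff [Zero R₁] (h₁ : ∀ a c, ¬ red1 0 a c) {g : R₂} {a c : R₁ × R₂} :
    prodRed red1 red2 (0, g) a c ↔ red2 g a.2 c.2 ∧ a.1 = c.1 := by
  simp [prodRed, h₁, and_comm]

lemma redBy_prodRed_prodBasis [Zero R₁] [Zero R₂] (h₁ : ∀ a c, ¬ red1 0 a c)
    (h₂ : ∀ a c, ¬ red2 0 a c) (G₁ : Set R₁) (G₂ : Set R₂) :
    RedBy (prodRed red1 red2) (prodBasis G₁ G₂) =
      Prod.GameAdd (RedBy red1 G₁) (RedBy red2 G₂) := by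
  funext a c
  rw [Prod.gameAdd_iff, eq_iff_iff]
  constructor
  · rintro ⟨_, ⟨g, hg, rfl⟩ | ⟨g, hg, rfl⟩, hred⟩
    · obtain ⟨hred, heq⟩ := (prodRed_mk_zero_iff h₂).1 hred
      exact .inl ⟨⟨g, hg, hred⟩, heq⟩
    · obtain ⟨hred, heq⟩ := (prodRed_zero_mk_iff h₁).1 hred
      exact .inr ⟨⟨g, hg, hred⟩, heq⟩
  · rintro (⟨⟨g, hg, hred⟩, heq⟩ | ⟨⟨g, hg, hred⟩, heq⟩)
    · exact ⟨(g, 0), .inl ⟨g, hg, rfl⟩, (prodRed_mk_zero_iff h₂).2 ⟨hred, heq⟩⟩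
    · exact ⟨(0, g), .inr ⟨g, hg, rfl⟩, (prodRed_zero_mk_iff h₁).2 ⟨hred, heq⟩⟩

lemma GBOf.prod [Ring R₁] [Ring R₂] {G₁ I₁ : Set R₁} {G₂ I₂ : Set R₂}
    (hG₁ : GBOf red1 G₁ I₁) (hG₂ : GBOf red2 G₂ I₂)
    (h₁ : ∀ a c, ¬ red1 0 a c) (h₂ : ∀ a c, ¬ red2 0 a c) :
    GBOf (prodRed red1 red2) (prodBasis G₁ G₂) (I₁ ×ˢ I₂) := by
  obtain ⟨hspan₁, heqv₁, hterm₁, hconf₁⟩ := hG₁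
  obtain ⟨hspan₂, heqv₂, hterm₂, hconf₂⟩ := hG₂
  rw [GBOf, redBy_prodRed_prodBasis h₁ h₂, idealSpan_prodBasis, hspan₁, hspan₂]
  refine ⟨rfl, fun a b => ?_, hterm₁.gameAdd hterm₂, hconf₁.gameAdd hconf₂⟩
  rw [Prod.eqvGen_gameAdd_iff, heqv₁, heqv₂]
  rfl

end ReductionRing

theorem prod_reduction_ring_general {R₁ R₂ : Type*} [Ring R₁] [Ring R₂]
    (red1 : R₁ → R₁ → R₁ → Prop) (red2 : R₂ → R₂ → R₂ → Prop)
    (hA1₁ : ∀ B : Set R₁, B.Finite → Terminating (RedBy red1 B))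
    (hA2₁ : ∀ b a c : R₁, red1 b a c → a - c ∈ idealSpan {b})
    (hRR₁ : ∀ B : Set R₁, B.Finite → ∃ G : Set R₁, G.Finite ∧ GBOf red1 G (idealSpan B))
    (hA1₂ : ∀ B : Set R₂, B.Finite → Terminating (RedBy red2 B))
    (hA2₂ : ∀ b a c : R₂, red2 b a c → a - c ∈ idealSpan {b})
    (hRR₂ : ∀ B : Set R₂, B.Finite → ∃ G : Set R₂, G.Finite ∧ GBOf red2 G (idealSpan B)) :
    ∀ B : Set (R₁ × R₂), B.Finite →
      ∃ G : Set (R₁ × R₂), G.Finite ∧ GBOf (prodRed red1 red2) G (idealSpan B) := by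
  intro B hB
  obtain ⟨G₁, hG₁, hGB₁⟩ := hRR₁ (Prod.fst '' B) (hB.image _)
  obtain ⟨G₂, hG₂, hGB₂⟩ := hRR₂ (Prod.snd '' B) (hB.image _)
  refine ⟨prodBasis G₁ G₂, (hG₁.image _).union (hG₂.image _), ?_⟩
  rw [idealSpan_prod subset_rfl (Set.subset_insert _ _) subset_rfl (Set.subset_insert _ _)]
  exact hGB₁.prod hGB₂ (not_red_zero (hA1₁ {0} (Set.finite_singleton 0)) hA2₁)
    (not_red_zero (hA1₂ {0} (Set.finite_singleton 0)) hA2₂)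

/-- The direct sum of two reduction rings is again a reduction ring: every
finitely generated ideal of `R₁ × R₂` has a finite Gröbner basis with respect
to the componentwise reduction relation. -/
theorem prod_reduction_ring {R₁ R₂ : Type*} [Ring R₁] [Ring R₂]
    (red1 : R₁ → R₁ → R₁ → Prop) (red2 : R₂ → R₂ → R₂ → Prop)
    (hA1₁ : ∀ B : Set R₁, B.Finite → Terminating (RedBy red1 B))
    (hA2₁ : ∀ b a c : R₁, red1 b a c → a - c ∈ idealSpan {b})
    (hA3₁ : ∀ a : R₁, a ≠ 0 → red1 a a 0)
    (hRR₁ : ∀ B : Set R₁, B.Finite → ∃ G : Set R₁, G.Finite ∧ GBOf red1 G (idealSpan B))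
    (hA1₂ : ∀ B : Set R₂, B.Finite → Terminating (RedBy red2 B))
    (hA2₂ : ∀ b a c : R₂, red2 b a c → a - c ∈ idealSpan {b})
    (hA3₂ : ∀ a : R₂, a ≠ 0 → red2 a a 0)
    (hRR₂ : ∀ B : Set R₂, B.Finite → ∃ G : Set R₂, G.Finite ∧ GBOf red2 G (idealSpan B)) :
    ∀ B : Set (R₁ × R₂), B.Finite →
      ∃ G : Set (R₁ × R₂), G.Finite ∧ GBOf (prodRed red1 red2) G (idealSpan B) :=
  prod_reduction_ring_general red1 red2 hA1₁ hA2₁ hRR₁ hA1₂ hA2₂ hRR₂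
end

section
/- Let F be a subset of the function ring F_K over a field K, not containing 0. Then F is a right standard basis of the right ideal it generates if and only if F is a weak right Gröbner basis, i.e., HT(ideal_r(F) \ {0}) = HT({f * m : f ∈ F, m a monomial} \ {0}). -/
variable {K T : Type*} [Field K] [LinearOrder T] [Nonempty T]

/-- The head term: the largest element of the support (junk value at `0`). -/
noncomputable def HT (f : T →₀ K) : T :=
  if h : f.support.Nonempty then f.support.max' h else Classical.arbitrary T

/-- The head term as an element of `WithBot T` (`⊥` for the zero function). -/
def HTb (f : T →₀ K) : WithBot T := f.support.max

/-- The head coefficient. -/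
noncomputable def HC (f : T →₀ K) : K := f (HT f)

/-- The head monomial. -/
noncomputable def HM (f : T →₀ K) : T →₀ K := Finsupp.single (HT f) (HC f)

/-- A monomial: a function of the form `α · t` with `α ≠ 0`. -/
def IsMonomial (m : T →₀ K) : Prop :=
  ∃ (t : T) (α : K), α ≠ 0 ∧ m = Finsupp.single t α

/-- The data of a function ring over the field `K` with set of terms `T`:
an associative, distributive multiplication on `T →₀ K` compatible with
scalar multiplication. -/
structure FRMul (K T : Type*) [Field K] [LinearOrder T] where
  mul : (T →₀ K) → (T →₀ K) → (T →₀ K)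
  mul_assoc : ∀ f g h, mul (mul f g) h = mul f (mul g h)
  left_distrib : ∀ f g h, mul f (g + h) = mul f g + mul f h
  right_distrib : ∀ f g h, mul (f + g) h = mul f h + mul g h
  smul_mul : ∀ (a : K) (f g : T →₀ K), mul (a • f) g = a • mul f g
  mul_smul : ∀ (a : K) (f g : T →₀ K), mul f (a • g) = a • mul f g

/-- The right ideal generated by `F`: finite sums `∑ fᵢ * hᵢ` with `fᵢ ∈ F`. -/
def rIdeal (M : FRMul K T) (F : Set (T →₀ K)) : Set (T →₀ K) :=
  {g | ∃ (n : ℕ) (fs hs : Fin n → (T →₀ K)),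
    (∀ i, fs i ∈ F) ∧ g = ∑ i, M.mul (fs i) (hs i)}

/-- A right standard representation of `g` in terms of `F`: a representation
`g = ∑ fᵢ * mᵢ` with `fᵢ ∈ F`, `mᵢ` monomials and `HT g ⪰ HT (fᵢ * mᵢ)`. -/
def RightStdRep (M : FRMul K T) (F : Set (T →₀ K)) (g : T →₀ K) : Prop :=
  ∃ (n : ℕ) (fs ms : Fin n → (T →₀ K)),
    (∀ i, fs i ∈ F) ∧ (∀ i, IsMonomial (ms i)) ∧
    g = ∑ i, M.mul (fs i) (ms i) ∧
    ∀ i, HTb (M.mul (fs i) (ms i)) ≤ HTb g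

section Aux

set_option linter.unusedSectionVars false

variable {K T : Type*} [Field K] [LinearOrder T] [Nonempty T]

lemma HT_mem_support {f : T →₀ K} (h : f ≠ 0) : HT f ∈ f.support := by
  have hne : f.support.Nonempty := Finsupp.support_nonempty_iff.mpr h
  simp only [HT, dif_pos hne]
  exact Finset.max'_mem _ hne

lemma HTb_eq_coe {f : T →₀ K} (h : f ≠ 0) : HTb f = ((HT f : T) : WithBot T) := by
  have hne : f.support.Nonempty := Finsupp.support_nonempty_iff.mpr h
  rw [HTb, ← Finset.coe_max' hne]
  congr 1
  simp [HT, dif_pos hne]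

lemma HC_ne_zero {f : T →₀ K} (h : f ≠ 0) : HC f ≠ 0 :=
  Finsupp.mem_support_iff.mp (HT_mem_support h)

lemma le_HTb_of_mem {f : T →₀ K} {t : T} (h : t ∈ f.support) : ((t : T) : WithBot T) ≤ HTb f :=
  Finset.le_max h

lemma apply_eq_zero_of_HTb_lt {f : T →₀ K} {t : T} (h : HTb f < ((t : T) : WithBot T)) :
    f t = 0 := by
  by_contra hc
  exact absurd (le_HTb_of_mem (Finsupp.mem_support_iff.mpr hc)) (not_le.mpr h)

/-- Cancellation: subtracting the right multiple of `h` lowers the head term. -/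
lemma HTb_sub_smul_lt {g h : T →₀ K} (hg : g ≠ 0) (hh : h ≠ 0) (hht : HT h = HT g) :
    HTb (g - (HC g / HC h) • h) < HTb g := by
  set c : K := HC g / HC h with hc
  have hgt : HTb g = ((HT g : T) : WithBot T) := HTb_eq_coe hg
  rw [hgt]
  have key : ∀ s ∈ (g - c • h).support, s < HT g := by
    intro s hs
    rw [Finsupp.mem_support_iff] at hs
    by_contra hns
    rcases lt_or_eq_of_le (not_lt.mp hns) with hlt | heq
    · have h1 : g s = 0 := apply_eq_zero_of_HTb_lt (by rw [hgt]; exact_mod_cast hlt)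
      have h2 : h s = 0 := apply_eq_zero_of_HTb_lt
        (by rw [HTb_eq_coe hh, hht]; exact_mod_cast hlt)
      simp [h1, h2] at hs
    · have h1 : g s = HC g := by rw [← heq]; rfl
      have h2 : h s = HC h := by rw [← heq, ← hht]; rfl
      have : g s - c * h s = 0 := by
        rw [h1, h2, hc, div_mul_cancel₀ _ (HC_ne_zero hh), sub_self]
      simp [Finsupp.sub_apply, Finsupp.smul_apply, this] at hs
  rcases (g - c • h).support.eq_empty_or_nonempty with he | hne
  · simp [HTb, he]
  · rw [HTb, ← Finset.coe_max' hne, WithBot.coe_lt_coe]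
    exact key _ (Finset.max'_mem _ hne)

lemma mul_mem_rIdeal (M : FRMul K T) (F : Set (T →₀ K)) {f : T →₀ K} (hf : f ∈ F)
    (h : T →₀ K) : M.mul f h ∈ rIdeal M F :=
  ⟨1, fun _ => f, fun _ => h, fun _ => hf, by simp⟩

lemma sub_mul_mem_rIdeal (M : FRMul K T) (F : Set (T →₀ K)) {g f : T →₀ K}
    (hg : g ∈ rIdeal M F) (hf : f ∈ F) (h : T →₀ K) :
    g - M.mul f h ∈ rIdeal M F := by
  obtain ⟨n, fs, hs, hmem, rfl⟩ := hg
  refine ⟨n + 1, Fin.cons f fs, Fin.cons (-h) hs, ?_, ?_⟩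
  · intro i
    refine Fin.cases ?_ ?_ i <;> simp [hf, hmem]
  · rw [Fin.sum_univ_succ]
    simp only [Fin.cons_zero, Fin.cons_succ]
    have : M.mul f (-h) = - M.mul f h := by
      have := M.mul_smul (-1 : K) f h
      simpa using this
    rw [this]
    abel

lemma RightStdRep_zero (M : FRMul K T) (F : Set (T →₀ K)) : RightStdRep M F 0 :=
  ⟨0, Fin.elim0, Fin.elim0, fun i => i.elim0, fun i => i.elim0, by simp, fun i => i.elim0⟩

end Aux

/-- A subset `F` of a function ring over a field, not containing `0`, is a right
standard basis of the right ideal it generates if and only if it is a weak right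
Gröbner basis, i.e. the head terms of the nonzero elements of the right ideal are
exactly the head terms of the nonzero monomial multiples `f * m`, `f ∈ F`. -/
theorem rightStdBasis_iff_weakRightGB
    (hwf : WellFounded ((· < ·) : T → T → Prop))
    (M : FRMul K T) (F : Set (T →₀ K)) (hF : (0 : T →₀ K) ∉ F) :
    (∀ g ∈ rIdeal M F, RightStdRep M F g) ↔
      {t : T | ∃ g ∈ rIdeal M F, g ≠ 0 ∧ HT g = t} =
        {t : T | ∃ f ∈ F, ∃ m : T →₀ K, IsMonomial m ∧
          M.mul f m ≠ 0 ∧ HT (M.mul f m) = t} := by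
  constructor
  · -- standard basis → weak GB
    intro hstd
    ext t
    simp only [Set.mem_setOf_eq]
    constructor
    · rintro ⟨g, hg, hg0, rfl⟩
      obtain ⟨n, fs, ms, hmem, hmono, hsum, hle⟩ := hstd g hg
      have hsupp : HT g ∈ g.support := HT_mem_support hg0
      have hne0 : (∑ i, M.mul (fs i) (ms i)) (HT g) ≠ 0 := by
        rw [← hsum]; exact Finsupp.mem_support_iff.mp hsupp
      rw [Finset.sum_apply'] at hne0
      obtain ⟨i, _, hi⟩ := Finset.exists_ne_zero_of_sum_ne_zero hne0
      have hmemi : HT g ∈ (M.mul (fs i) (ms i)).support := Finsupp.mem_support_iff.mpr hi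
      have hle' : ((HT g : T) : WithBot T) ≤ HTb (M.mul (fs i) (ms i)) := le_HTb_of_mem hmemi
      have hne : M.mul (fs i) (ms i) ≠ 0 := by
        intro h0; rw [h0] at hmemi; simp at hmemi
      have heq : HTb (M.mul (fs i) (ms i)) = ((HT g : T) : WithBot T) :=
        le_antisymm (by rw [← HTb_eq_coe hg0]; exact hle i) hle'
      refine ⟨fs i, hmem i, ms i, hmono i, hne, ?_⟩
      rw [HTb_eq_coe hne] at heq
      exact_mod_cast heq
    · rintro ⟨f, hf, m, hm, hne, rfl⟩
      exact ⟨M.mul f m, mul_mem_rIdeal M F hf m, hne, rfl⟩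
  · -- weak GB → standard basis
    intro hgb g hg
    rcases eq_or_ne g 0 with rfl | hg0
    · exact RightStdRep_zero M F
    have main : ∀ t : T, ∀ g ∈ rIdeal M F, g ≠ 0 → HT g = t → RightStdRep M F g := by
      intro t
      induction t using hwf.induction with
      | _ t ih =>
        intro g hg hg0 hteq
        subst hteq
        have ht : HT g ∈ {t : T | ∃ f ∈ F, ∃ m : T →₀ K, IsMonomial m ∧
            M.mul f m ≠ 0 ∧ HT (M.mul f m) = t} := by
          rw [← hgb]; exact ⟨g, hg, hg0, rfl⟩
        obtain ⟨f, hf, m, hm, hfm0, hht⟩ := ht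
        set c : K := HC g / HC (M.mul f m) with hc
        have hcne : c ≠ 0 := div_ne_zero (HC_ne_zero hg0) (HC_ne_zero hfm0)
        set g' : T →₀ K := g - c • M.mul f m with hg'
        have hlt : HTb g' < HTb g := HTb_sub_smul_lt hg0 hfm0 hht
        have hmul : c • M.mul f m = M.mul f (c • m) := (M.mul_smul c f m).symm
        have hg'mem : g' ∈ rIdeal M F := by
          rw [hg', hmul]; exact sub_mul_mem_rIdeal M F hg hf _
        have hcm : IsMonomial (c • m) := by
          obtain ⟨s, α, hα, rfl⟩ := hm
          exact ⟨s, c * α, mul_ne_zero hcne hα, by rw [Finsupp.smul_single, smul_eq_mul]⟩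
        have hrep' : RightStdRep M F g' := by
          rcases eq_or_ne g' 0 with h0 | h0
          · rw [h0]; exact RightStdRep_zero M F
          · refine ih (HT g') ?_ g' hg'mem h0 rfl
            rw [HTb_eq_coe hg0, HTb_eq_coe h0, WithBot.coe_lt_coe] at hlt
            exact hlt
        obtain ⟨n, fs, ms, hmem, hmono, hsum, hle⟩ := hrep'
        refine ⟨n + 1, Fin.cons f fs, Fin.cons (c • m) ms, ?_, ?_, ?_, ?_⟩
        · intro i; refine Fin.cases ?_ ?_ i <;> simp [hf, hmem]
        · intro i; refine Fin.cases ?_ ?_ i <;> simp [hcm, hmono]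
        · rw [Fin.sum_univ_succ]
          simp only [Fin.cons_zero, Fin.cons_succ]
          rw [← hsum, ← hmul, hg']
          abel
        · intro i
          refine Fin.cases ?_ ?_ i
          · simp only [Fin.cons_zero]
            rw [← hmul]
            have hs : HTb (c • M.mul f m) = HTb (M.mul f m) := by
              rw [HTb, HTb, Finsupp.support_smul_eq hcne]
            rw [hs, HTb_eq_coe hfm0, hht, ← HTb_eq_coe hg0]
          · intro j
            simp only [Fin.cons_succ]
            exact le_trans (hle j) (le_of_lt hlt)
    exact main (HT g) g hg hg0 rfl
end

section
/- Let F ⊆ F_K be a set of polynomials in a function ring over a field K with right reduction →_r defined via a right reductive restriction ≥ of the term ordering. For all polynomials p, q, h ∈ F_K: (1) if p − q →_{r,F} h then there exist p', q' with p →*_{r,F} p', q →*_{r,F} q' and h = p' − q'; (2) if 0 is a normal form of p − q with respect to F then there exists g with p →*_{r,F} g and q →*_{r,F} g (Translation Lemma). -/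
variable {K T : Type*} [Field K] [LinearOrder T] [Nonempty T]

/-- A right reductive restriction `≥` of the term ordering: a partial ordering
contained in `⪰` and compatible with right multiplication in the sense that if
`t₂ ≥ t₁`, `t₁ ≻ t` and `t₂ = HT (t₁ * w)`, then `t₂ ≻ t * w`. -/
structure RROrder (K T : Type*) [Field K] [LinearOrder T] [Nonempty T]
    (M : FRMul K T) where
  geq : T → T → Prop
  refl : ∀ t, geq t t
  trans : ∀ {a b c}, geq a b → geq b c → geq a c
  antisymm : ∀ {a b}, geq a b → geq b a → a = b
  le_of_geq : ∀ {t s}, geq t s → s ≤ t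
  compat : ∀ {t t₁ t₂ w : T}, geq t₂ t₁ → t < t₁ →
    HTb (M.mul (Finsupp.single t₁ (1 : K)) (Finsupp.single w (1 : K))) = (t₂ : WithBot T) →
    ∀ s ∈ (M.mul (Finsupp.single t (1 : K)) (Finsupp.single w (1 : K))).support, s < t₂

/-- Right reduction: `f` right reduces `p` to `q` at the monomial `p t · t` if
there is a monomial `m` with `HT (f * m) = HT (HT f * m) = t ≥ HT f` and
`HM (f * m) = p t · t`, and `q = p - f * m`. -/
def RRed (M : FRMul K T) (O : RROrder K T M) (f p q : T →₀ K) : Prop :=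
  f ≠ 0 ∧ ∃ t ∈ p.support, ∃ m : T →₀ K, IsMonomial m ∧
    HTb (M.mul f m) = (t : WithBot T) ∧
    HTb (M.mul (Finsupp.single (HT f) (1 : K)) m) = (t : WithBot T) ∧
    O.geq t (HT f) ∧
    HM (M.mul f m) = Finsupp.single t (p t) ∧
    q = p - M.mul f m

/-- Right reduction by a set of polynomials. -/
def RRedSet (M : FRMul K T) (O : RROrder K T M) (F : Set (T →₀ K)) (p q : T →₀ K) : Prop :=
  ∃ f ∈ F, RRed M O f p q

lemma support_nonempty_of_HTb {g : T →₀ K} {t : T} (h : HTb g = (t : WithBot T)) :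
    g.support.Nonempty := by
  rw [Finset.nonempty_iff_ne_empty]
  intro hc
  rw [HTb, hc] at h
  simp at h

lemma HT_eq_of_HTb {g : T →₀ K} {t : T} (h : HTb g = (t : WithBot T)) : HT g = t := by
  have hne := support_nonempty_of_HTb h
  rw [HT, dif_pos hne]
  have h2 := Finset.coe_max' hne
  rw [HTb] at h
  exact WithBot.coe_injective (h2.trans h)

lemma mem_support_of_HTb {g : T →₀ K} {t : T} (h : HTb g = (t : WithBot T)) :
    t ∈ g.support :=
  Finset.mem_of_max h

lemma HTb_smul {c : K} (hc : c ≠ 0) (g : T →₀ K) : HTb (c • g) = HTb g := by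
  unfold HTb; rw [Finsupp.support_smul_eq hc]

lemma HT_smul {c : K} (hc : c ≠ 0) (g : T →₀ K) : HT (c • g) = HT g := by
  unfold HT; rw [Finsupp.support_smul_eq hc]

lemma rred_scale (M : FRMul K T) (O : RROrder K T M) {f p : T →₀ K} {t : T} {m : T →₀ K}
    (hf : f ≠ 0) (hm : IsMonomial m)
    (h1 : HTb (M.mul f m) = (t : WithBot T))
    (h2 : HTb (M.mul (Finsupp.single (HT f) (1 : K)) m) = (t : WithBot T))
    (h3 : O.geq t (HT f)) (hpt : p t ≠ 0) :
    RRed M O f p (p - (p t / (M.mul f m) t) • M.mul f m) := by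
  set g := M.mul f m with hg
  have hgt : g t ≠ 0 := Finsupp.mem_support_iff.mp (mem_support_of_HTb h1)
  set c := p t / g t with hc
  have hc0 : c ≠ 0 := div_ne_zero hpt hgt
  refine ⟨hf, t, Finsupp.mem_support_iff.mpr hpt, c • m, ?_, ?_, ?_, h3, ?_, ?_⟩
  · obtain ⟨s, α, hα, rfl⟩ := hm
    exact ⟨s, c * α, mul_ne_zero hc0 hα, by rw [Finsupp.smul_single, smul_eq_mul]⟩
  · rw [M.mul_smul, HTb_smul hc0]; exact h1
  · rw [M.mul_smul, HTb_smul hc0]; exact h2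
  · rw [M.mul_smul, HM, HC, HT_smul hc0, HT_eq_of_HTb h1]
    simp only [Finsupp.smul_apply, smul_eq_mul]
    rw [hc, div_mul_cancel₀ _ hgt]
  · rw [M.mul_smul]

/-- The Translation Lemma for right reduction in a function ring over a field:
(1) a reduction step on `p - q` can be translated into reductions of `p` and `q`;
(2) if `p - q` reduces to `0`, then `p` and `q` have a common reduct. -/
theorem translation_lemma
    (hwf : WellFounded ((· < ·) : T → T → Prop))
    (M : FRMul K T) (O : RROrder K T M) (F : Set (T →₀ K)) :
    (∀ p q h : T →₀ K, RRedSet M O F (p - q) h →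
        ∃ p' q' : T →₀ K, Relation.ReflTransGen (RRedSet M O F) p p' ∧
          Relation.ReflTransGen (RRedSet M O F) q q' ∧ h = p' - q') ∧
      (∀ p q : T →₀ K, Relation.ReflTransGen (RRedSet M O F) (p - q) 0 →
        ∃ g : T →₀ K, Relation.ReflTransGen (RRedSet M O F) p g ∧
          Relation.ReflTransGen (RRedSet M O F) q g) := by
  have part1 : ∀ p q h : T →₀ K, RRedSet M O F (p - q) h →
      ∃ p' q' : T →₀ K, Relation.ReflTransGen (RRedSet M O F) p p' ∧
        Relation.ReflTransGen (RRedSet M O F) q q' ∧ h = p' - q' := by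
    rintro p q h ⟨f, hfF, hf0, t, htsupp, m, hm, h1, h2, h3, hHM, rfl⟩
    set g := M.mul f m with hg
    have hHTg : HT g = t := HT_eq_of_HTb h1
    have hgt0 : g t ≠ 0 := Finsupp.mem_support_iff.mp (mem_support_of_HTb h1)
    have hgt : g t = p t - q t := by
      have h5 : HM g t = Finsupp.single t ((p - q) t) t := by rw [hHM]
      rw [HM, HC, hHTg] at h5
      simpa [Finsupp.single_eq_same, Finsupp.sub_apply] using h5
    refine ⟨p - (p t / g t) • g, q - (q t / g t) • g, ?_, ?_, ?_⟩
    · by_cases hpt : p t = 0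
      · have h6 : p - (p t / g t) • g = p := by rw [hpt]; simp
        rw [h6]
      · exact Relation.ReflTransGen.single ⟨f, hfF, rred_scale M O hf0 hm h1 h2 h3 hpt⟩
    · by_cases hqt : q t = 0
      · have h6 : q - (q t / g t) • g = q := by rw [hqt]; simp
        rw [h6]
      · exact Relation.ReflTransGen.single ⟨f, hfF, rred_scale M O hf0 hm h1 h2 h3 hqt⟩
    · have h7 : p t / g t - q t / g t = 1 := by
        rw [div_sub_div_same, ← hgt, div_self hgt0]
      rw [sub_sub_sub_comm, ← sub_smul, h7, one_smul]
  refine ⟨part1, ?_⟩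
  have part2 : ∀ a : T →₀ K, Relation.ReflTransGen (RRedSet M O F) a 0 →
      ∀ p q : T →₀ K, a = p - q →
        ∃ g : T →₀ K, Relation.ReflTransGen (RRedSet M O F) p g ∧
          Relation.ReflTransGen (RRedSet M O F) q g := by
    intro a ha
    induction ha using Relation.ReflTransGen.head_induction_on with
    | refl =>
      intro p q hpq
      have : p = q := sub_eq_zero.mp hpq.symm
      exact ⟨p, Relation.ReflTransGen.refl, by rw [this]⟩
    | head hstep hrest ih =>
      rintro p q rfl
      obtain ⟨p', q', hp, hq, rfl⟩ := part1 p q _ hstep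
      obtain ⟨g, hg1, hg2⟩ := ih p' q' rfl
      exact ⟨g, hp.trans hg1, hq.trans hg2⟩
  intro p q h
  exact part2 _ h p q rfl
end

section
/- Let F be a commutative function ring with unit 1, F₀ ⊆ F a subset and f ∈ F. Then f ∈ √(ideal(F₀)) if and only if 1 ∈ ideal(F₀ ∪ {z*f − 1}) computed in the extended function ring F^{{z}*T} obtained by adjoining a new tag variable z commuting with all terms (Rabinowitsch trick). -/
/-- Rabinowitsch trick: in a commutative function ring `A` with unit, `f` lies
in the radical of the ideal generated by `F₀` if and only if `1` lies in the
ideal generated by `F₀ ∪ {z * f - 1}` in the extension of `A` by a new tag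
variable `z` commuting with all terms. -/
theorem radical_membership {A : Type*} [CommRing A] (F₀ : Set A) (f : A) :
    f ∈ (Ideal.span F₀).radical ↔
      (1 : Polynomial A) ∈ Ideal.span
        ((Polynomial.C '' F₀) ∪ {Polynomial.X * Polynomial.C f - 1}) := by
  constructor
  · intro hf
    obtain ⟨m, hm⟩ := hf
    have h1 : Polynomial.C (f ^ m) ∈ Ideal.span (Polynomial.C '' F₀) := by
      rw [← Ideal.map_span (Polynomial.C : A →+* Polynomial A)]
      exact Ideal.mem_map_of_mem _ hm
    have h2 : (Polynomial.X * Polynomial.C f - 1) ∈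
        Ideal.span ((Polynomial.C '' F₀) ∪ {Polynomial.X * Polynomial.C f - 1}) :=
      Ideal.subset_span (Or.inr rfl)
    have h1' : Polynomial.X ^ m * Polynomial.C (f ^ m) ∈
        Ideal.span ((Polynomial.C '' F₀) ∪ {Polynomial.X * Polynomial.C f - 1}) :=
      Ideal.mul_mem_left _ _ (Ideal.span_mono Set.subset_union_left h1)
    obtain ⟨q, hq⟩ := sub_dvd_pow_sub_pow (Polynomial.X * Polynomial.C f) 1 m
    have h3 : ((Polynomial.X * Polynomial.C f) ^ m - 1 ^ m) ∈
        Ideal.span ((Polynomial.C '' F₀) ∪ {Polynomial.X * Polynomial.C f - 1}) := by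
      rw [hq]; exact Ideal.mul_mem_right _ _ h2
    have key : (1 : Polynomial A) =
        Polynomial.X ^ m * Polynomial.C (f ^ m) -
          ((Polynomial.X * Polynomial.C f) ^ m - 1 ^ m) := by
      rw [map_pow]; ring
    have hmem := Ideal.sub_mem _ h1' h3
    rwa [← key] at hmem
  · intro h
    rw [Ideal.radical_eq_sInf, Ideal.mem_sInf]
    rintro p ⟨hle, hprime⟩
    haveI := hprime
    by_contra hfp
    let K := FractionRing (A ⧸ p)
    have hgf : (algebraMap (A ⧸ p) K) ((Ideal.Quotient.mk p) f) ≠ 0 := by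
      simpa [IsFractionRing.to_map_eq_zero_iff, Ideal.Quotient.eq_zero_iff_mem] using hfp
    let φ : Polynomial A →+* K :=
      Polynomial.eval₂RingHom ((algebraMap (A ⧸ p) K).comp (Ideal.Quotient.mk p))
        ((algebraMap (A ⧸ p) K) ((Ideal.Quotient.mk p) f))⁻¹
    have hker : Ideal.span ((Polynomial.C '' F₀) ∪ {Polynomial.X * Polynomial.C f - 1}) ≤
        RingHom.ker φ := by
      rw [Ideal.span_le]
      rintro x (⟨a, ha, rfl⟩ | hx)
      · have hap : a ∈ p := hle (Ideal.subset_span ha)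
        simp [φ, RingHom.mem_ker, Polynomial.coe_eval₂RingHom, Polynomial.eval₂_C,
          IsFractionRing.to_map_eq_zero_iff, Ideal.Quotient.eq_zero_iff_mem, hap]
      · simp only [Set.mem_singleton_iff] at hx
        subst hx
        simp only [SetLike.mem_coe, RingHom.mem_ker, map_sub, map_mul, map_one, φ,
          Polynomial.coe_eval₂RingHom, Polynomial.eval₂_C, Polynomial.eval₂_X,
          RingHom.comp_apply]
        rw [inv_mul_cancel₀ hgf, sub_self]
    have : φ 1 = 0 := hker h
    rw [map_one] at this
    exact one_ne_zero this
end

section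
/- Let i and j be two-sided ideals of a function ring F with unit 1, and let z be a new tag variable commuting with all terms. Then i ∩ j = ideal_{F^{{z}*T}}(z*i ∪ (z − 1)*j) ∩ F, where z*i = {z*f : f ∈ i} and (z−1)*j = {(z−1)*f : f ∈ j}. -/
/-- A (two-sided) ideal: a nonempty subset closed under subtraction and under
left and right multiplication by ring elements. -/
def IsIdeal {A : Type*} [Ring A] (S : Set A) : Prop :=
  S.Nonempty ∧ (∀ a ∈ S, ∀ b ∈ S, a - b ∈ S) ∧ ∀ a ∈ S, ∀ r : A, r * a ∈ S ∧ a * r ∈ S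

lemma IsIdeal.zero_mem {A : Type*} [Ring A] {S : Set A} (h : IsIdeal S) : (0 : A) ∈ S := by
  obtain ⟨⟨a, ha⟩, hsub, _⟩ := h
  simpa using hsub a ha a ha

lemma IsIdeal.add_mem {A : Type*} [Ring A] {S : Set A} (h : IsIdeal S)
    {a b : A} (ha : a ∈ S) (hb : b ∈ S) : a + b ∈ S := by
  have h0 : (0 : A) - b ∈ S := h.2.1 0 h.zero_mem b hb
  simpa using h.2.1 a ha _ h0

lemma IsIdeal.sum_mem {A : Type*} [Ring A] {S : Set A} (h : IsIdeal S)
    {n : ℕ} {c : Fin n → A} (hc : ∀ k, c k ∈ S) : ∑ k, c k ∈ S := by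
  induction n with
  | zero => simpa using h.zero_mem
  | succ m ih =>
      rw [Fin.sum_univ_succ]
      exact h.add_mem (hc 0) (ih fun k => hc k.succ)

/-- Intersecting two two-sided ideals via a tag variable: for ideals `i`, `j`
of a function ring `A` with unit and a new tag variable `z` commuting with all
terms (modelled by the polynomial ring `A[z]`),
`i ∩ j = ideal(z*i ∪ (z-1)*j) ∩ A`. -/
theorem ideal_intersection_tag {A : Type*} [Ring A]
    (i j : Set A) (hi : IsIdeal i) (hj : IsIdeal j) (f : A) :
    (f ∈ i ∧ f ∈ j) ↔
      Polynomial.C f ∈ idealSpan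
        ((fun g : A => Polynomial.X * Polynomial.C g) '' i ∪
          (fun g : A => (Polynomial.X - 1) * Polynomial.C g) '' j) := by
  constructor
  · rintro ⟨hfi, hfj⟩
    refine ⟨2, ![1, -1], ![1, 1],
      ![Polynomial.X * Polynomial.C f, (Polynomial.X - 1) * Polynomial.C f], ?_, ?_⟩
    · intro k
      fin_cases k
      · exact Or.inl ⟨f, hfi, rfl⟩
      · exact Or.inr ⟨f, hfj, rfl⟩
    · simp [Fin.sum_univ_two, sub_mul, Polynomial.X_mul_C]
  · rintro ⟨n, g, h, b, hb, heq⟩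
    constructor
    · -- evaluate at 1
      set φ : Polynomial A →+* A :=
        Polynomial.eval₂RingHom' (RingHom.id A) 1 (fun a => Commute.one_right _) with hφ
      have hφX : φ Polynomial.X = 1 := by simp [hφ, Polynomial.eval₂RingHom']
      have hφC : ∀ a : A, φ (Polynomial.C a) = a := by
        intro a; simp [hφ, Polynomial.eval₂RingHom']
      have := congrArg φ heq
      rw [map_sum] at this
      simp only [map_mul, hφC] at this
      rw [this]
      refine hi.sum_mem fun k => ?_
      rcases hb k with ⟨a, hai, hba⟩ | ⟨c, hcj, hbc⟩
      · have : φ (b k) = a := by rw [← hba, map_mul, hφX, hφC, one_mul]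
        rw [this]
        exact ((hi.2.2 _ ((hi.2.2 a hai (φ (g k))).1) (φ (h k))).2)
      · have : φ (b k) = 0 := by rw [← hbc, map_mul, map_sub, hφX]; simp
        simp [this, hi.zero_mem]
    · -- constant coefficient
      set ψ : Polynomial A →+* A := Polynomial.constantCoeff with hψ
      have hψX : ψ Polynomial.X = 0 := by simp [hψ]
      have hψC : ∀ a : A, ψ (Polynomial.C a) = a := by intro a; simp [hψ]
      have := congrArg ψ heq
      rw [map_sum] at this
      simp only [map_mul, hψC] at this
      rw [this]
      refine hj.sum_mem fun k => ?_
      rcases hb k with ⟨a, hai, hba⟩ | ⟨c, hcj, hbc⟩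
      · have : ψ (b k) = 0 := by rw [← hba, map_mul, hψX, zero_mul]
        simp [this, hj.zero_mem]
      · have hψb : ψ (b k) = -c := by
          rw [← hbc, map_mul, map_sub, hψX, hψC]; simp
        rw [hψb]
        have h1 : (-c : A) ∈ j := by simpa using hj.2.1 0 hj.zero_mem c hcj
        exact ((hj.2.2 _ ((hj.2.2 _ h1 (ψ (g k))).1) (ψ (h k))).2)
end
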